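/- Let R be a commutative ring, x, y ∈ R, and let λ = (λ_1,…,λ_k) be a partition with λ_{k+1} := 0. Then Σ_{(C_1,…,C_k)} x^{Σ_{i=1}^k max(C_i − λ_{i+1}, 0)} · y^{#\{ i : C_i = 0 \}} = det( M_{ij} )_{1 ≤ i,j ≤ k}, where the sum on the left is over all integer tuples (C_1,…,C_k) with λ_i ≥ C_i ≥ C_{i+1} ≥ 0 for all i (equivalently, all partitions with at most k parts contained in λ), and M_{ij} = C(λ_{j+1}, j−i+1) + y·C(λ_{j+1}, j−i) + Σ_{p=1}^{λ_j − λ_{j+1}} x^p ( C(λ_{j+1}+p−1, j−i) + y·C(λ_{j+1}+p−1, j−i−1) ). -/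

import Mathlib

/-!
Read the left side as the weighted sum `B k` over weakly decreasing chains `C` under `λ`. Peeling
off the smallest part and subtracting the chains whose smallest part is too small gives, by
inclusion–exclusion over strictly decreasing initial runs,
`B (n+1) = ∑_{i ≤ n} (-1)^(n+i) E i n * B i`, where `E i n` sums the weights of strictly
decreasing chains of length `n + 1 - i` below `λ_{n+1} + 1`. Below `λ_{n+2}` every weight is `1`
(or `y` at the part `0`), so Pascal's rule evaluates `E i n` to the matrix entry `M i n`. The
matrix `M` vanishes below its subdiagonal and is `1` on it, and expanding its leading minors
along the last column yields the same recursion.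
-/

open Finset

/-- Binomial coefficient `C(a, b)` with integer lower argument; it is `0` when
`b < 0` or `b > a`. -/
def chooseZ (a : ℕ) (b : ℤ) : ℕ := if 0 ≤ b then a.choose b.toNat else 0

/-- The 1-based parts `λ_1, …, λ_k` of the partition `lam : Fin k → ℕ`,
extended by `0` outside `{1, …, k}` (so in particular `λ_{k+1} = 0`). -/
def lamE {k : ℕ} (lam : Fin k → ℕ) (t : ℕ) : ℕ :=
  if h : 1 ≤ t ∧ t ≤ k then lam ⟨t - 1, by omega⟩ else 0

/-- The entry `M_{ij}` of the matrix of the determinantal identity.  Here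
`i j : Fin k` are 0-based (the paper's 1-based indices are `i+1`, `j+1`):
`M_{ij} = C(λ_{j+1}, j-i+1) + y C(λ_{j+1}, j-i)
  + Σ_{p=1}^{λ_j-λ_{j+1}} x^p (C(λ_{j+1}+p-1, j-i) + y C(λ_{j+1}+p-1, j-i-1))`. -/
def entryM {R : Type} [CommRing R] (x y : R) {k : ℕ} (lam : Fin k → ℕ) (i j : Fin k) : R :=
  (chooseZ (lamE lam ((j : ℕ) + 2)) (((j : ℕ) : ℤ) - ((i : ℕ) : ℤ) + 1) : ℕ)
    + y * ((chooseZ (lamE lam ((j : ℕ) + 2)) (((j : ℕ) : ℤ) - ((i : ℕ) : ℤ)) : ℕ) : R)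
    + ∑ p ∈ Finset.Icc 1 (lamE lam ((j : ℕ) + 1) - lamE lam ((j : ℕ) + 2)),
        x ^ p * (((chooseZ (lamE lam ((j : ℕ) + 2) + p - 1) (((j : ℕ) : ℤ) - ((i : ℕ) : ℤ)) : ℕ) : R)
          + y * ((chooseZ (lamE lam ((j : ℕ) + 2) + p - 1) (((j : ℕ) : ℤ) - ((i : ℕ) : ℤ) - 1) : ℕ) : R))

lemma chooseZ_natCast (n r : ℕ) : chooseZ n r = n.choose r := by
  simp [chooseZ]

lemma chooseZ_of_neg (n : ℕ) {z : ℤ} (hz : z < 0) : chooseZ n z = 0 := by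
  simp [chooseZ, hz.not_ge]

lemma chooseZ_succ_succ (n : ℕ) (z : ℤ) :
    chooseZ (n + 1) (z + 1) = chooseZ n z + chooseZ n (z + 1) := by
  rcases lt_trichotomy z (-1) with hz | rfl | hz
  · simp [chooseZ_of_neg _ (by omega : z + 1 < 0), chooseZ_of_neg _ (by omega : z < 0)]
  · simp [chooseZ]
  · lift z to ℕ using (by omega)
    rw [← Nat.cast_add_one, chooseZ_natCast, chooseZ_natCast, chooseZ_natCast]
    exact Nat.choose_succ_succ n z

section Chains

variable {R : Type*} [CommRing R] (w : ℕ → ℕ → R) (b : ℕ → ℕ)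

lemma snoc_mem_filter_antitone_iff {n c j : ℕ} {D : Fin n → ℕ} :
    (Fin.snoc D j : Fin (n + 1) → ℕ) ∈
        (Fintype.piFinset fun i : Fin (n + 1) => Icc c (b i)).filter
        (fun C => ∀ i i' : Fin (n + 1), i ≤ i' → C i' ≤ C i) ↔
      j ∈ Icc c (b n) ∧ D ∈ (Fintype.piFinset fun i : Fin n => Icc j (b i)).filter
        (fun C => ∀ i i' : Fin n, i ≤ i' → C i' ≤ C i) := by
  simp only [mem_filter, Fintype.mem_piFinset, mem_Icc, Fin.forall_fin_succ', Fin.snoc_castSucc,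
    Fin.snoc_last, Fin.val_castSucc, Fin.val_last, Fin.castSucc_le_castSucc_iff, Fin.le_last,
    (Fin.castSucc_lt_last _).not_ge, le_refl, forall_const, IsEmpty.forall_iff, and_true]
  grind

def chainSum : ℕ → ℕ → R
  | 0, _ => 1
  | n + 1, c => ∑ j ∈ Icc c (b n), w n j * chainSum n j

theorem sum_filter_antitone_eq_chainSum : ∀ n c : ℕ,
    ∑ C ∈ (Fintype.piFinset fun i : Fin n => Icc c (b i)).filter
        (fun C => ∀ i i' : Fin n, i ≤ i' → C i' ≤ C i), ∏ i : Fin n, w i (C i)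
      = chainSum w b n c
  | 0, c => by simp [chainSum]
  | n + 1, c => by
    rw [chainSum]
    simp_rw [← sum_filter_antitone_eq_chainSum n, mul_sum]
    rw [sum_sigma']
    refine sum_nbij' (fun C => ⟨C (Fin.last n), Fin.init C⟩) (fun p => Fin.snoc p.2 p.1)
      ?_ ?_ ?_ ?_ ?_
    · intro C hC
      rw [← Fin.snoc_init_self C, snoc_mem_filter_antitone_iff] at hC
      simpa [Fin.snoc_last] using hC
    · rintro ⟨j, D⟩ h
      exact (snoc_mem_filter_antitone_iff b).2 (by simpa using h)
    · intro C _; simp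
    · rintro ⟨j, D⟩ _; simp
    · intro C _
      simp [Fin.prod_univ_castSucc, Fin.init, mul_comm]

/-- For `r ≤ n`, `strictChainSum w r n j` is the sum of `∏ s, w (n - s) tₛ` over the strictly
decreasing chains `j > t₁ > ⋯ > t_r`. -/
def strictChainSum : ℕ → ℕ → ℕ → R
  | 0, _, _ => 1
  | _ + 1, 0, _ => 0
  | r + 1, n + 1, j => ∑ t ∈ range j, w n t * strictChainSum r n t

lemma strictChainSum_zero_right (r n : ℕ) :
    strictChainSum w r n 0 = if r = 0 then 1 else 0 := by
  rcases r with _ | r <;> rcases n with _ | n <;> simp [strictChainSum]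

lemma strictChainSum_succ_succ (r n j : ℕ) :
    strictChainSum w (r + 1) (n + 1) j = ∑ t ∈ range j, w n t * strictChainSum w r n t :=
  rfl

lemma strictChainSum_succ_succ_succ (r n j : ℕ) :
    strictChainSum w (r + 1) (n + 1) (j + 1)
      = strictChainSum w (r + 1) (n + 1) j + w n j * strictChainSum w r n j :=
  sum_range_succ _ _

lemma chainSum_succ_eq_sub (n j : ℕ) (hj : j ≤ b n + 1) :
    chainSum w b (n + 1) j
      = chainSum w b (n + 1) 0 - ∑ t ∈ range j, w n t * chainSum w b n t := by
  rw [eq_sub_iff_add_eq', chainSum, chainSum, ← Ico_add_one_right_eq_Icc,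
    ← Ico_add_one_right_eq_Icc, ← range_eq_Ico, sum_range_add_sum_Ico _ hj]

theorem chainSum_eq_sum_alternating : ∀ n j : ℕ, (∀ m < n, j ≤ b m + 1) →
    chainSum w b n j = ∑ i ∈ range (n + 1),
      (-1) ^ (n + i) * strictChainSum w (n - i) n j * chainSum w b i 0
  | 0, j, _ => by simp [chainSum, strictChainSum]
  | n + 1, j, hj => by
    have peel : ∑ t ∈ range j, w n t * chainSum w b n t = ∑ i ∈ range (n + 1),
        (-1) ^ (n + i) * strictChainSum w (n + 1 - i) (n + 1) j * chainSum w b i 0 := by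
      calc _ = ∑ t ∈ range j, ∑ i ∈ range (n + 1),
              w n t * ((-1) ^ (n + i) * strictChainSum w (n - i) n t * chainSum w b i 0) := by
            refine sum_congr rfl fun t ht => ?_
            rw [chainSum_eq_sum_alternating n t fun m hm => by
              have := hj m (by omega); have := mem_range.1 ht; omega, mul_sum]
        _ = _ := by
            rw [sum_comm]
            refine sum_congr rfl fun i hi => ?_
            rw [show n + 1 - i = n - i + 1 by have := mem_range.1 hi; omega,
              strictChainSum_succ_succ, mul_sum, sum_mul]
            exact sum_congr rfl fun t _ => by ring
    rw [chainSum_succ_eq_sub w b n j (hj n n.lt_succ_self), peel, sum_range_succ _ (n + 1),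
      Nat.sub_self, strictChainSum, ← two_mul, pow_mul, neg_one_sq, one_pow, one_mul, one_mul,
      sub_eq_add_neg, ← sum_neg_distrib, add_comm]
    congr 1
    exact sum_congr rfl fun i _ => by ring

theorem chainSum_succ_zero (hb : Antitone b) (n : ℕ) :
    chainSum w b (n + 1) 0 = ∑ i ∈ range (n + 1),
      (-1) ^ (n + i) * strictChainSum w (n + 1 - i) (n + 1) (b n + 1) * chainSum w b i 0 := by
  have h := chainSum_eq_sum_alternating w b (n + 1) (b n + 1) fun m hm => by
    have := hb (Nat.le_of_lt_succ hm); omega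
  rw [chainSum, Icc_eq_empty (by omega), sum_empty, sum_range_succ, Nat.sub_self, strictChainSum,
    ← two_mul, pow_mul, neg_one_sq, one_pow, one_mul, one_mul] at h
  rw [eq_neg_of_add_eq_zero_right h.symm, ← sum_neg_distrib]
  exact sum_congr rfl fun i _ => by ring

end Chains

section Hessenberg

variable {R : Type*} [CommRing R] (f : ℕ → ℕ → R)

lemma det_submatrix_succAbove_castSucc_of_hessenberg (hf0 : ∀ i j, j + 1 < i → f i j = 0)
    (hf1 : ∀ j, f (j + 1) j = 1) : ∀ (n : ℕ) (i : Fin (n + 1)),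
    ((Matrix.of fun a b : Fin (n + 1) => f a b).submatrix i.succAbove Fin.castSucc).det
      = (Matrix.of fun a b : Fin i => f a b).det
  | 0, i => by
    obtain rfl : i = 0 := Fin.fin_one_eq_zero i
    simp
  | n + 1, i => by
    induction i using Fin.lastCases with
    | last =>
      rw [Fin.val_last, Fin.succAbove_last]
      rfl
    | cast i =>
      have hlast : i.castSucc.succAbove (Fin.last n) = Fin.last (n + 1) := by
        rw [Fin.succAbove_castSucc_of_le _ _ (Fin.le_last i), Fin.succ_last]
      rw [Matrix.det_succ_row _ (Fin.last n), Fin.sum_univ_castSucc, sum_eq_zero, zero_add]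
      · rw [Fin.val_castSucc, ← det_submatrix_succAbove_castSucc_of_hessenberg hf0 hf1 n i]
        simp only [Fin.val_last, Even.add_self, Even.neg_pow, one_pow, Matrix.submatrix_apply,
          hlast, Matrix.of_apply, Fin.val_castSucc, hf1, mul_one, one_mul, Fin.succAbove_last,
          Matrix.submatrix_submatrix, Function.comp_def, Fin.castSucc_succAbove_castSucc]
        rfl
      · intro j _
        simp [hlast, hf0 (n + 1) j (by omega)]

lemma det_hessenberg_succ (hf0 : ∀ i j, j + 1 < i → f i j = 0) (hf1 : ∀ j, f (j + 1) j = 1)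
    (n : ℕ) :
    (Matrix.of fun a b : Fin (n + 1) => f a b).det
      = ∑ i : Fin (n + 1),
          (-1) ^ (i + n : ℕ) * f i n * (Matrix.of fun a b : Fin i => f a b).det := by
  rw [Matrix.det_succ_column _ (Fin.last n)]
  simp_rw [Fin.succAbove_last, det_submatrix_succAbove_castSucc_of_hessenberg f hf0 hf1]
  rfl

theorem det_hessenberg_eq_of_recurrence (hf0 : ∀ i j, j + 1 < i → f i j = 0)
    (hf1 : ∀ j, f (j + 1) j = 1) (g : ℕ → R) (hg0 : g 0 = 1)
    (hg : ∀ n, g (n + 1) = ∑ i ∈ range (n + 1), (-1) ^ (n + i) * f i n * g i) :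
    ∀ n, (Matrix.of fun a b : Fin n => f a b).det = g n
  | 0 => by simp [hg0]
  | n + 1 => by
    rw [det_hessenberg_succ f hf0 hf1, hg, ← Fin.sum_univ_eq_sum_range]
    exact sum_congr rfl fun i _ => by
      rw [Nat.add_comm (i : ℕ) n, det_hessenberg_eq_of_recurrence hf0 hf1 g hg0 hg i]

end Hessenberg

section Weights

variable {R : Type*} [CommRing R] (x y : R) (b : ℕ → ℕ)

def partWeight (m j : ℕ) : R := x ^ (j - b (m + 1)) * if j = 0 then y else 1

theorem strictChainSum_partWeight_of_le (hb : Antitone b) :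
    ∀ u r n : ℕ, r ≤ n → u ≤ b n →
    strictChainSum (partWeight x y b) r n (u + 1) = chooseZ u r + y * chooseZ u (r - 1)
  | u, 0, n, _, _ => by simp [strictChainSum, chooseZ]
  | _, _ + 1, 0, hr, _ => absurd hr (by omega)
  | 0, r + 1, n + 1, hr, _ => by
    rw [strictChainSum_succ_succ, sum_range_one, strictChainSum_zero_right,
      show ((r + 1 : ℕ) : ℤ) - 1 = r by omega, chooseZ_natCast, chooseZ_natCast]
    rcases r with _ | r <;> simp [partWeight]
  | u + 1, r + 1, n + 1, hr, hu => by
    rw [strictChainSum_succ_succ_succ,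
      strictChainSum_partWeight_of_le hb u (r + 1) (n + 1) hr (by omega),
      strictChainSum_partWeight_of_le hb u r n (by omega)
        (by have : b (n + 1) ≤ b n := hb n.le_succ; omega)]
    have hflat : partWeight x y b n (u + 1) = 1 := by
      simp [partWeight, show u + 1 - b (n + 1) = 0 by omega]
    have hpascal := chooseZ_succ_succ u r
    have hpascal' := chooseZ_succ_succ u (r - 1)
    rw [sub_add_cancel] at hpascal'
    rw [hflat, Nat.cast_add_one, add_sub_cancel_right, hpascal, hpascal']
    push_cast
    ring

/-- `entryM` with the parts read off an arbitrary `b`, `b t` playing the role of `λ_{t+1}`: the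
leading minors of `M` are determinants of this shape. -/
def matrixEntry (i j : ℕ) : R :=
  (chooseZ (b (j + 1)) ((j : ℤ) - (i : ℤ) + 1) : ℕ)
    + y * ((chooseZ (b (j + 1)) ((j : ℤ) - (i : ℤ)) : ℕ) : R)
    + ∑ p ∈ Icc 1 (b j - b (j + 1)),
        x ^ p * (((chooseZ (b (j + 1) + p - 1) ((j : ℤ) - (i : ℤ)) : ℕ) : R)
          + y * ((chooseZ (b (j + 1) + p - 1) ((j : ℤ) - (i : ℤ) - 1) : ℕ) : R))

lemma matrixEntry_of_lt {i j : ℕ} (h : j + 1 < i) : matrixEntry x y b i j = 0 := by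
  simp [matrixEntry, chooseZ_of_neg _ (by omega : (j : ℤ) - i + 1 < 0),
    chooseZ_of_neg _ (by omega : (j : ℤ) - i < 0),
    chooseZ_of_neg _ (by omega : (j : ℤ) - i - 1 < 0)]

lemma matrixEntry_succ_self (j : ℕ) : matrixEntry x y b (j + 1) j = 1 := by
  simp [matrixEntry, chooseZ]

lemma matrixEntry_eq_strictChainSum (hb : Antitone b) {i n : ℕ} (hi : i ≤ n) :
    matrixEntry x y b i n = strictChainSum (partWeight x y b) (n + 1 - i) (n + 1) (b n + 1) := by
  obtain ⟨r, hr, rfl⟩ : ∃ r ≤ n, i = n - r := ⟨n - i, Nat.sub_le n i, by omega⟩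
  have hbn : b (n + 1) ≤ b n := hb n.le_succ
  have hlow : ∑ t ∈ range (b (n + 1) + 1),
        partWeight x y b n t * strictChainSum (partWeight x y b) r n t
      = chooseZ (b (n + 1)) ((r : ℤ) + 1) + y * chooseZ (b (n + 1)) (r : ℤ) := by
    rw [← strictChainSum_succ_succ,
      strictChainSum_partWeight_of_le x y b hb _ _ _ (by omega) le_rfl]
    push_cast
    ring_nf
  have hhigh : ∑ t ∈ Ico (b (n + 1) + 1) (b n + 1),
        partWeight x y b n t * strictChainSum (partWeight x y b) r n t
      = ∑ p ∈ Icc 1 (b n - b (n + 1)), x ^ p * (chooseZ (b (n + 1) + p - 1) (r : ℤ)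
          + y * chooseZ (b (n + 1) + p - 1) ((r : ℤ) - 1)) := by
    refine sum_nbij' (fun t => t - b (n + 1)) (fun p => b (n + 1) + p) ?_ ?_ ?_ ?_ ?_
    · intro t ht; simp only [mem_Ico, mem_Icc] at ht ⊢; omega
    · intro p hp; simp only [mem_Ico, mem_Icc] at hp ⊢; omega
    · intro t ht; simp only [mem_Ico] at ht; omega
    · intro p hp; simp only [mem_Icc] at hp; omega
    · intro t ht
      simp only [mem_Ico] at ht
      obtain ⟨u, rfl⟩ : ∃ u, t = u + 1 := ⟨t - 1, by omega⟩
      rw [strictChainSum_partWeight_of_le x y b hb _ _ _ hr (by omega),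
        show b (n + 1) + (u + 1 - b (n + 1)) - 1 = u by omega]
      simp [partWeight]
  rw [show n + 1 - (n - r) = r + 1 by omega, strictChainSum_succ_succ,
    ← sum_range_add_sum_Ico _ (by omega : b (n + 1) + 1 ≤ b n + 1), hlow, hhigh, matrixEntry,
    show (n : ℤ) - (n - r : ℕ) = r by omega]

theorem det_matrixEntry (hb : Antitone b) (n : ℕ) :
    (Matrix.of fun i j : Fin n => matrixEntry x y b i j).det
      = chainSum (partWeight x y b) b n 0 := by
  refine det_hessenberg_eq_of_recurrence _ (fun i j h => matrixEntry_of_lt x y b h)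
    (matrixEntry_succ_self x y b) (chainSum (partWeight x y b) b · 0) rfl (fun n => ?_) n
  rw [chainSum_succ_zero _ _ hb]
  refine sum_congr rfl fun i hi => ?_
  rw [matrixEntry_eq_strictChainSum x y b hb (Nat.le_of_lt_succ (mem_range.1 hi))]

end Weights

lemma lamE_succ {k : ℕ} (lam : Fin k → ℕ) (i : Fin k) : lamE lam (i + 1) = lam i := by
  simp [lamE]

lemma antitone_lamE_succ {k : ℕ} {lam : Fin k → ℕ}
    (hlam : ∀ i j : Fin k, i ≤ j → lam j ≤ lam i) : Antitone fun t => lamE lam (t + 1) := by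
  intro s t hst
  by_cases ht : t < k
  · simp only [lamE, dif_pos (⟨by omega, by omega⟩ : 1 ≤ s + 1 ∧ s + 1 ≤ k),
      dif_pos (⟨by omega, by omega⟩ : 1 ≤ t + 1 ∧ t + 1 ≤ k), Nat.add_sub_cancel]
    exact hlam ⟨s, by omega⟩ ⟨t, ht⟩ hst
  · simp [lamE, show ¬ t + 1 ≤ k by omega]

/-- **Generating-function form of the main determinantal theorem**: for a
partition `λ` with at most `k` parts (and `λ_{k+1} = 0`),
`Σ_C x^{Σ_i max(C_i - λ_{i+1}, 0)} y^{#{i : C_i = 0}} = det M`, the sum being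
over all tuples `(C_1, …, C_k)` with `λ_i ≥ C_i ≥ C_{i+1} ≥ 0`, i.e. over all
partitions with at most `k` parts contained in `λ`. -/
theorem stmt9 (R : Type) [CommRing R] (x y : R) (k : ℕ) (lam : Fin k → ℕ)
    (hlam : ∀ i j : Fin k, i ≤ j → lam j ≤ lam i) :
    (∑ C ∈ (Fintype.piFinset fun i : Fin k => range (lam i + 1)).filter
        (fun C => ∀ i j : Fin k, i ≤ j → C j ≤ C i),
      x ^ (∑ i : Fin k, (C i - lamE lam ((i : ℕ) + 2)))
        * y ^ (univ.filter fun i : Fin k => C i = 0).card)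
      = Matrix.det (Matrix.of fun i j : Fin k => entryM x y lam i j) := by
  set b := fun t => lamE lam (t + 1)
  have hrange : (fun i : Fin k => range (lam i + 1)) = fun i : Fin k => Icc 0 (b i) := by
    funext i
    rw [range_eq_Ico, Ico_add_one_right_eq_Icc, ← lamE_succ lam i]
  have hsummand : ∀ C : Fin k → ℕ, x ^ (∑ i : Fin k, (C i - lamE lam ((i : ℕ) + 2)))
      * y ^ (univ.filter fun i : Fin k => C i = 0).card
        = ∏ i : Fin k, partWeight x y b i (C i) := by
    intro C
    rw [← prod_const, prod_filter, ← prod_pow_eq_pow_sum, ← prod_mul_distrib]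
    rfl
  have hmatrix : Matrix.of (fun i j : Fin k => entryM x y lam i j)
      = Matrix.of fun i j : Fin k => matrixEntry x y b i j := rfl
  rw [hrange, hmatrix, det_matrixEntry x y b (antitone_lamE_succ hlam),
    ← sum_filter_antitone_eq_chainSum]
  exact sum_congr rfl fun C _ => hsummand C
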